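/- If one sums the recovery-after-pseudo-weak outcomes over the ignored pseudo-weak index k, the resulting weighted state for outcome ℓ equals the state from the original measurement: for any density operator ρ, Σ_k √(E^rc_{(k),ℓ}) √(E_k^pw) ρ √(E_k^pw) √(E^rc_{(k),ℓ}) has the same trace as √(E_ℓ) ρ √(E_ℓ), namely tr(E_ℓ ρ). -/

import Mathlib

open Matrix
open scoped ComplexOrder

noncomputable def Matrix.PosSemidef.sqrt {n 𝕜 : Type*} [Fintype n] [DecidableEq n] [RCLike 𝕜]
    {A : Matrix n n 𝕜} (hA : A.PosSemidef) : Matrix n n 𝕜 :=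
  hA.1.eigenvectorUnitary.1 * diagonal ((↑) ∘ (√·) ∘ hA.1.eigenvalues) *
  (star hA.1.eigenvectorUnitary : Matrix n n 𝕜)

theorem Matrix.PosSemidef.sqrt_mul_self {n 𝕜 : Type*} [Fintype n] [DecidableEq n] [RCLike 𝕜]
    {A : Matrix n n 𝕜} (hA : A.PosSemidef) : hA.sqrt * hA.sqrt = A := by
  have hU : (star hA.1.eigenvectorUnitary : Matrix n n 𝕜) * hA.1.eigenvectorUnitary.1 = 1 :=
    Unitary.star_mul_self_of_mem hA.1.eigenvectorUnitary.2
  conv_rhs => rw [hA.1.spectral_theorem]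
  rw [Unitary.conjStarAlgAut_apply]
  simp only [Matrix.PosSemidef.sqrt, Matrix.mul_assoc]
  rw [← Matrix.mul_assoc (star _ : Matrix n n 𝕜) _ _, hU, Matrix.one_mul,
    ← Matrix.mul_assoc (diagonal _), diagonal_mul_diagonal]
  congr 3
  funext i
  simp only [Function.comp]
  rw [← RCLike.ofReal_mul, Real.mul_self_sqrt (hA.eigenvalues_nonneg i)]

/-- Ignoring (summing over) the pseudo-weak outcome `k`, the weighted post-measurement state for
recovery outcome `ℓ` has the same trace as the state obtained from the original measurement,
namely `tr(E_ℓ ρ)`. -/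
theorem stmt_4 (d n : ℕ) (E : Fin n → Matrix (Fin d) (Fin d) ℂ)
    (hpos : ∀ j, (E j).PosSemidef) (hsum : ∑ j, E j = 1)
    (b : Fin n → ℝ) (hb : ∀ j, 0 < b j)
    (β : ℝ) (hβ : β = 1 / (1 + ∑ j, b j))
    (Epw : Fin n → Matrix (Fin d) (Fin d) ℂ)
    (hEpw : ∀ k, Epw k = (β : ℂ) • ((b k : ℂ) • (1 : Matrix (Fin d) (Fin d) ℂ) + E k))
    (hEpwPSD : ∀ k, (Epw k).PosSemidef)
    (hinv : ∀ k, IsUnit (Epw k))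
    (Erc : Fin n → Fin n → Matrix (Fin d) (Fin d) ℂ)
    (hErc : ∀ k ℓ, Erc k ℓ =
      ((β : ℂ) * ((b k : ℂ) + if k = ℓ then 1 else 0)) •
        ((hEpwPSD k).sqrt⁻¹ * E ℓ * (hEpwPSD k).sqrt⁻¹))
    (hErcPSD : ∀ k ℓ, (Erc k ℓ).PosSemidef)
    (ρ : Matrix (Fin d) (Fin d) ℂ) (hρ : ρ.PosSemidef) (hρtr : ρ.trace = 1) :
    ∀ ℓ : Fin n,
      (∑ k, ((hErcPSD k ℓ).sqrt * (hEpwPSD k).sqrt * ρ *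
          (hEpwPSD k).sqrt * (hErcPSD k ℓ).sqrt).trace) = (E ℓ * ρ).trace ∧
      ((hpos ℓ).sqrt * ρ * (hpos ℓ).sqrt).trace = (E ℓ * ρ).trace := by
  intro ℓ
  have hsq : ∀ (A : Matrix (Fin d) (Fin d) ℂ) (hA : A.PosSemidef) (X : Matrix (Fin d) (Fin d) ℂ),
      (hA.sqrt * X * hA.sqrt).trace = (A * X).trace := by
    intro A hA X
    rw [trace_mul_cycle, hA.sqrt_mul_self]
  refine ⟨?_, hsq _ _ _⟩
  have hdet : ∀ k, IsUnit ((hEpwPSD k).sqrt).det := by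
    intro k
    have h1 : (hEpwPSD k).sqrt * (hEpwPSD k).sqrt = Epw k := (hEpwPSD k).sqrt_mul_self
    have h2 : IsUnit ((Epw k).det) := (Matrix.isUnit_iff_isUnit_det _).mp (hinv k)
    rw [← h1, Matrix.det_mul] at h2
    exact isUnit_of_mul_isUnit_left h2
  have key : ∀ k, ((hErcPSD k ℓ).sqrt * (hEpwPSD k).sqrt * ρ *
      (hEpwPSD k).sqrt * (hErcPSD k ℓ).sqrt).trace
      = ((β : ℂ) * ((b k : ℂ) + if k = ℓ then 1 else 0)) * (E ℓ * ρ).trace := by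
    intro k
    set S := (hEpwPSD k).sqrt with hS
    set R := (hErcPSD k ℓ).sqrt with hR
    have h1 : (R * S * ρ * S * R).trace = (Erc k ℓ * (S * ρ * S)).trace := by
      rw [trace_mul_comm, ← (hErcPSD k ℓ).sqrt_mul_self]
      simp only [Matrix.mul_assoc]
      rfl
    rw [h1, hErc k ℓ, Matrix.smul_mul, trace_smul, smul_eq_mul]
    congr 1
    have h2 : (S⁻¹ * E ℓ * S⁻¹) * (S * ρ * S) = S⁻¹ * (E ℓ * (ρ * S)) := by
      simp only [Matrix.mul_assoc]
      rw [Matrix.nonsing_inv_mul_cancel_left _ _ (hdet k)]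
    rw [h2, trace_mul_comm]
    simp only [Matrix.mul_assoc]
    rw [Matrix.mul_nonsing_inv _ (hdet k), Matrix.mul_one]
  rw [Finset.sum_congr rfl (fun k _ => key k), ← Finset.sum_mul]
  have hc : (∑ k, ((β : ℂ) * ((b k : ℂ) + if k = ℓ then 1 else 0))) = 1 := by
    have hbnn : (0:ℝ) ≤ ∑ j, b j := Finset.sum_nonneg fun j _ => (hb j).le
    have hne : (1 + ∑ j, b j : ℝ) ≠ 0 := by linarith
    rw [← Finset.mul_sum, Finset.sum_add_distrib]
    simp only [Finset.sum_ite_eq', Finset.mem_univ, if_true]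
    have hcast : (∑ k, (b k : ℂ)) = ((∑ j, b j : ℝ) : ℂ) := by push_cast; ring
    rw [hcast, hβ]
    have hneC : (1 + ((∑ j, b j : ℝ) : ℂ)) ≠ 0 := by exact_mod_cast hne
    push_cast at hneC ⊢
    field_simp
    ring
  rw [hc, one_mul]
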